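/- arXiv:0712.2810 — 3 statements merged into one kernel-verified Lean document; each statement's English description precedes it below -/
import Mathlib

section
/- Let N ≥ 2, let N_1 = ⌊N/2⌋ and N_2 = N − N_1. Let x_1, …, x_N ∈ ℤ³ and let f : [0,∞) → [0,∞) be any nonnegative function. For each partition P = (π_1, π_2) of {1,…,N} into disjoint sets with |π_1| = N_1 and |π_2| = N_2, and each i ∈ π_1, let D_i^P = min{|x_i − x_j| : j ∈ π_2}. With D_i = min_{j≠i} |x_i − x_j|, one has Σ_{i=1}^N f(D_i) ≤ 4 · binom(N, N_1)^{−1} Σ_P Σ_{i∈π_1} f(D_i^P), where the outer sum runs over all binom(N, N_1) such partitions. -/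
/-!
Fix for every point `i` a nearest neighbour `nn i ≠ i`. Whenever a partition puts `i` in `π₁`
and `nn i` in `π₂`, one has `D_i^P = D_i`; since `f ≥ 0`, the partition average is therefore at
least the fraction of partitions that separate `i` from `nn i` in this way, namely
`binom(N-2, N₁-1) / binom(N, N₁)`. By Pascal's rule applied twice and unimodality of the
binomial coefficients, `binom(N, N₁) ≤ 4 binom(N-2, N₁-1)`, so this fraction is at least
`1/4`.
-/

open scoped BigOperators

abbrev Z3 := Fin 3 → ℤ

noncomputable section

/-- The Euclidean norm of a point of `ℤ³`. -/
def enormZ (x : Z3) : ℝ := Real.sqrt (∑ i, ((x i : ℝ))^2)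

/-- `D_i = min_{j ≠ i} |x_i - x_j|`. -/
def Dmin {N : ℕ} (x : Fin N → Z3) (i : Fin N) : ℝ :=
  sInf {d : ℝ | ∃ j, j ≠ i ∧ d = enormZ (x i - x j)}

/-- `D_i^P = min{|x_i - x_j| : j ∈ π₂}` for the partition `P = (π₁, π₂)` determined by
the set `S = π₁` (so `π₂` is the complement of `S`). -/
def DminP {N : ℕ} (x : Fin N → Z3) (S : Finset (Fin N)) (i : Fin N) : ℝ :=
  sInf {d : ℝ | ∃ j, j ∉ S ∧ d = enormZ (x i - x j)}

end

open Finset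

namespace Nat

lemma choose_succ_le_two_mul_choose_middle (n r : ℕ) :
    (n + 1).choose r ≤ 2 * n.choose (n / 2) := by
  cases r with
  | zero =>
    have := Nat.choose_pos (Nat.div_le_self n 2)
    rw [Nat.choose_zero_right]; omega
  | succ m =>
    rw [Nat.choose_succ_succ']
    have := Nat.choose_le_middle m n
    have := Nat.choose_le_middle (m + 1) n
    omega

lemma choose_middle_add_two_le (n : ℕ) :
    (n + 2).choose ((n + 2) / 2) ≤ 4 * n.choose (n / 2) := by
  rw [show (n + 2) / 2 = n / 2 + 1 by omega, Nat.choose_succ_succ']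
  have := choose_succ_le_two_mul_choose_middle n (n / 2)
  have := choose_succ_le_two_mul_choose_middle n (n / 2 + 1)
  omega

end Nat

namespace Finset

lemma sum_card_filter_mul_le_sum_sum {α : Type*} [Fintype α] (P : Finset (Finset α))
    (p : Finset α → α → Prop) [∀ S i, Decidable (p S i)] (g : α → ℝ)
    (h : Finset α → α → ℝ)
    (h_nonneg : ∀ S ∈ P, ∀ i ∈ S, 0 ≤ h S i)
    (hp : ∀ S ∈ P, ∀ i, p S i → i ∈ S ∧ h S i = g i) :
    ∑ i, (#{S ∈ P | p S i} : ℝ) * g i ≤ ∑ S ∈ P, ∑ i ∈ S, h S i := by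
  calc ∑ i, (#{S ∈ P | p S i} : ℝ) * g i
      = ∑ S ∈ P, ∑ i with p S i, g i := by
        simp_rw [← nsmul_eq_mul, ← sum_const, sum_filter]
        exact sum_comm
    _ = ∑ S ∈ P, ∑ i with p S i, h S i :=
        sum_congr rfl fun S hS => sum_congr rfl fun i hi =>
          (hp S hS i (mem_filter.1 hi).2).2.symm
    _ ≤ ∑ S ∈ P, ∑ i ∈ S, h S i :=
        sum_le_sum fun S hS => sum_le_sum_of_subset_of_nonneg
          (fun i hi => (hp S hS i (mem_filter.1 hi).2).1) fun i hi _ => h_nonneg S hS i hi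

lemma card_filter_mem_notMem_powersetCard_succ {α : Type*} [DecidableEq α] {s : Finset α}
    {a b : α} (ha : a ∈ s) (hb : b ∈ s) (hab : a ≠ b) (k : ℕ) :
    #{t ∈ s.powersetCard (k + 1) | a ∈ t ∧ b ∉ t} = (#s - 2).choose k := by
  have hcard : #((s.erase a).erase b) = #s - 2 := by
    rw [card_erase_of_mem (mem_erase.2 ⟨hab.symm, hb⟩), card_erase_of_mem ha]; omega
  rw [← hcard, ← card_powersetCard]
  refine card_nbij' (·.erase a) (insert a) ?_ ?_ ?_ ?_
  · intro t ht
    simp only [mem_coe, mem_filter, mem_powersetCard] at ht ⊢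
    refine ⟨fun c hc => ?_, by rw [card_erase_of_mem ht.2.1, ht.1.2]; rfl⟩
    grind
  · intro u hu
    simp only [mem_coe, mem_filter, mem_powersetCard, subset_iff, mem_erase] at hu ⊢
    have hau : a ∉ u := fun h => (hu.1 h).2.1 rfl
    refine ⟨⟨?_, by rw [card_insert_of_notMem hau, hu.2]⟩, mem_insert_self a u, ?_⟩ <;>
      grind
  · intro t ht
    exact insert_erase (mem_filter.1 ht).2.1
  · intro u hu
    simp only [mem_coe, mem_powersetCard, subset_iff, mem_erase] at hu
    exact erase_insert fun h => (hu.1 h).2.1 rfl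

end Finset

section NearestNeighbour

variable {N : ℕ} (x : Fin N → Z3)

lemma Dmin_eq_DminP_singleton (i : Fin N) : Dmin x i = DminP x {i} i := by
  simp only [Dmin, DminP, mem_singleton]

lemma DminP_set_finite (S : Finset (Fin N)) (i : Fin N) :
    {d : ℝ | ∃ j, j ∉ S ∧ d = enormZ (x i - x j)}.Finite :=
  (Set.finite_range fun j => enormZ (x i - x j)).subset fun _ ⟨j, _, hd⟩ => ⟨j, hd.symm⟩

lemma DminP_le {S : Finset (Fin N)} (i : Fin N) {j : Fin N} (hj : j ∉ S) :
    DminP x S i ≤ enormZ (x i - x j) :=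
  csInf_le (DminP_set_finite x S i).bddBelow ⟨j, hj, rfl⟩

lemma exists_DminP_eq {S : Finset (Fin N)} {j₀ : Fin N} (hj₀ : j₀ ∉ S) (i : Fin N) :
    ∃ j ∉ S, DminP x S i = enormZ (x i - x j) :=
  Set.Nonempty.csInf_mem (s := {d : ℝ | ∃ j, j ∉ S ∧ d = enormZ (x i - x j)})
    ⟨_, j₀, hj₀, rfl⟩ (DminP_set_finite x S i)

lemma Dmin_le {i j : Fin N} (hj : j ≠ i) : Dmin x i ≤ enormZ (x i - x j) := by
  rw [Dmin_eq_DminP_singleton]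
  exact DminP_le x i (notMem_singleton.2 hj)

lemma exists_Dmin_eq (hN : 2 ≤ N) (i : Fin N) : ∃ j ≠ i, Dmin x i = enormZ (x i - x j) := by
  have : Nontrivial (Fin N) := Fin.nontrivial_iff_two_le.2 hN
  obtain ⟨j₀, hj₀⟩ := exists_ne i
  simpa [Dmin_eq_DminP_singleton] using exists_DminP_eq x (notMem_singleton.2 hj₀) i

lemma DminP_eq_Dmin_of_mem_of_notMem {S : Finset (Fin N)} {i j : Fin N} (hi : i ∈ S)
    (hj : j ∉ S) (hD : Dmin x i = enormZ (x i - x j)) : DminP x S i = Dmin x i := by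
  obtain ⟨j', hj', hD'⟩ := exists_DminP_eq x hj i
  refine le_antisymm (hD ▸ DminP_le x i hj) (hD' ▸ Dmin_le x ?_)
  rintro rfl
  exact hj' hi

end NearestNeighbour

/-- **Partition averaging bound**: with `N₁ = ⌊N/2⌋` and partitions `P = (π₁, π₂)` of
`{1,…,N}` into sets of sizes `N₁` and `N₂ = N - N₁` (identified with the subsets
`S = π₁` of size `N₁`),
`∑ᵢ f(Dᵢ) ≤ 4 (binom(N,N₁))⁻¹ ∑_P ∑_{i ∈ π₁} f(Dᵢᴾ)`. -/
theorem nearest_neighbor_partition_average (N : ℕ) (hN : 2 ≤ N)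
    (x : Fin N → Z3) (f : ℝ → ℝ) (hf : ∀ t, 0 ≤ f t) :
    ∑ i, f (Dmin x i) ≤
      4 * ((N.choose (N/2) : ℝ))⁻¹ *
        ∑ S ∈ Finset.powersetCard (N/2) (Finset.univ : Finset (Fin N)),
          ∑ i ∈ S, f (DminP x S i) := by
  choose nn hnn_ne hnn using exists_Dmin_eq x hN
  obtain ⟨n, rfl⟩ : ∃ n, N = n + 2 := ⟨N - 2, by omega⟩
  have hk : (n + 2) / 2 = n / 2 + 1 := by omega
  have hchoose : ((n + 2).choose (n / 2 + 1) : ℝ) ≤ 4 * n.choose (n / 2) := by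
    exact_mod_cast hk ▸ Nat.choose_middle_add_two_le n
  rw [hk]
  set P := powersetCard (n / 2 + 1) (univ : Finset (Fin (n + 2)))
  have hseparating (i : Fin (n + 2)) : #{S ∈ P | i ∈ S ∧ nn i ∉ S} = n.choose (n / 2) := by
    rw [card_filter_mem_notMem_powersetCard_succ (mem_univ _) (mem_univ _) (hnn_ne i).symm,
      card_univ, Fintype.card_fin, Nat.add_sub_cancel]
  have hcount : (n.choose (n / 2) : ℝ) * ∑ i, f (Dmin x i) ≤
      ∑ S ∈ P, ∑ i ∈ S, f (DminP x S i) := by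
    simpa only [hseparating, mul_sum] using sum_card_filter_mul_le_sum_sum P
      (fun S i => i ∈ S ∧ nn i ∉ S) (fun i => f (Dmin x i)) (fun S i => f (DminP x S i))
      (fun _ _ _ _ => hf _)
      fun _ _ i hi =>
        ⟨hi.1, congrArg f (DminP_eq_Dmin_of_mem_of_notMem x hi.1 hi.2 (hnn i))⟩
  have hpos : (0 : ℝ) < (n + 2).choose (n / 2 + 1) := by
    exact_mod_cast Nat.choose_pos (by omega)
  rw [mul_comm 4, mul_assoc, ← div_eq_inv_mul, le_div_iff₀ hpos]
  calc (∑ i, f (Dmin x i)) * (n + 2).choose (n / 2 + 1)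
      ≤ (∑ i, f (Dmin x i)) * (4 * n.choose (n / 2)) :=
        mul_le_mul_of_nonneg_left hchoose (sum_nonneg fun i _ => hf _)
    _ = 4 * (n.choose (n / 2) * ∑ i, f (Dmin x i)) := by ring
    _ ≤ 4 * ∑ S ∈ P, ∑ i ∈ S, f (DminP x S i) := by gcongr
end

section
/- There exist constants C > 0 and ρ_0 > 0 such that for all 0 < ρ ≤ ρ_0: |e(ρ) − (3/5)(6π²)^{2/3} ρ^{5/3}| ≤ C ρ^{7/3}. Consequently e_0(ρ_u, ρ_d) = (3/5)(6π²)^{2/3}(ρ_u^{5/3} + ρ_d^{5/3}) + O(ρ^{7/3}) for ρ = ρ_u + ρ_d small. -/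
/-!
Near the band bottom `E(p) = |p|² + O(|p|⁴)`: on the cube, `|p|² - |p|⁴/12 ≤ E(p) ≤ |p|²`, and
Jordan's inequality `|p|² ≤ (π²/4) E(p)` controls the quartic term. Hence the Fermi sea
`{E ≤ k²}` lies between the balls of radii `k` and `k (1 + k²/3)`, and its volume is
`(4π/3) k³ (1 + O(k²))`. At density `ρ = k³/(6π²)`, that of the continuum Fermi ball of radius
`k`, this pins `√E_f(ρ)` to `k (1 + O(k²))`; the layer-cake formula
`∫_{E ≤ e} E = e V(e) - ∫₀^e V(t) dt` then turns the volume bounds into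
`e(ρ) = (3/5) k⁵/(6π²) + O(k⁷/(6π²))`.
-/

open scoped BigOperators

noncomputable section

def cube3 : Set (Fin 3 → ℝ) := Set.Icc (fun _ => -Real.pi) (fun _ => Real.pi)

/-- The lattice dispersion relation `E(p) = 2 ∑ᵢ (1 - cos pⁱ)`. -/
def Edisp (p : Fin 3 → ℝ) : ℝ := 2 * ∑ i, (1 - Real.cos (p i))

/-- The Fermi energy `E_f(ρ)`, determined by `(2π)⁻³ vol{p ∈ [-π,π]³ : E(p) ≤ E_f(ρ)} = ρ`. -/
def fermiE (ρ : ℝ) : ℝ :=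
  sInf {e : ℝ | ρ ≤ (MeasureTheory.volume {p ∈ cube3 | Edisp p ≤ e}).toReal / (2*Real.pi)^3}

/-- The ground state energy per unit volume `e(ρ)` of the ideal lattice Fermi gas. -/
def eFree (ρ : ℝ) : ℝ :=
  (∫ p in {p ∈ cube3 | Edisp p ≤ fermiE ρ}, Edisp p) / (2*Real.pi)^3

def e0 (ρu ρd : ℝ) : ℝ := eFree ρu + eFree ρd

open Real MeasureTheory Set

theorem sq_div_two_sub_pow_four_div_le_one_sub_cos (x : ℝ) :
    x ^ 2 / 2 - x ^ 4 / 24 ≤ 1 - cos x := by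
  rcases le_or_gt 12 (x ^ 2) with hx | hx
  · nlinarith [cos_le_one x]
  have hcos : 1 - cos x = 2 * sin (x / 2) ^ 2 := by
    have := cos_two_mul' (x / 2)
    rw [show 2 * (x / 2) = x by ring] at this
    linarith [sin_sq_add_cos_sq (x / 2)]
  set a := |x / 2|
  have ha : a ^ 2 = x ^ 2 / 4 := by rw [sq_abs]; ring
  have hsin : a - a ^ 3 / 6 ≤ |sin (x / 2)| := by
    have := (abs_sub_abs_le_abs_sub (x / 2) (sin (x / 2))).trans (abs_sub_sin_le (x / 2))
    linarith
  have hpos : 0 ≤ a - a ^ 3 / 6 := by nlinarith [abs_nonneg (x / 2)]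
  have hsq := pow_le_pow_left₀ hpos hsin 2
  rw [sq_abs] at hsq
  nlinarith [sq_nonneg (a ^ 3), pow_two_nonneg a]

theorem volume_sum_sq_le_sq {r : ℝ} (hr : 0 ≤ r) :
    volume {x : Fin 3 → ℝ | ∑ i, x i ^ 2 ≤ r ^ 2} = ENNReal.ofReal (4 / 3 * π * r ^ 3) := by
  have hΓ : Gamma (3 / 2 + 1) = 3 / 4 * √π := by
    rw [Gamma_add_one (by norm_num), show (3 : ℝ) / 2 = 1 / 2 + 1 by norm_num,
      Gamma_add_one (by norm_num), Gamma_one_half_eq]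
    ring
  have hball : volume {x : Fin 3 → ℝ | ∑ i, x i ^ 2 ≤ r ^ 2} =
      volume (Metric.closedBall (0 : EuclideanSpace ℝ (Fin 3)) r) := by
    rw [← (PiLp.volume_preserving_toLp (Fin 3)).measure_preimage
      Metric.isClosed_closedBall.nullMeasurableSet, EuclideanSpace.closedBall_zero_eq r hr]
    rfl
  rw [hball, EuclideanSpace.volume_closedBall, Fintype.card_fin, Nat.cast_ofNat, hΓ,
    ← ENNReal.ofReal_pow hr, ← ENNReal.ofReal_mul (by positivity)]
  congr 1
  have hπ : 0 < √π := sqrt_pos.2 pi_pos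
  field_simp
  rw [sq_sqrt pi_pos.le]

theorem integral_eq_mul_sub_integral_measureReal_le {α : Type*} [MeasurableSpace α]
    {μ : Measure α} [IsFiniteMeasure μ] {f : α → ℝ} {M : ℝ} (hM : 0 ≤ M)
    (hf : Integrable f μ) (hnn : 0 ≤ᵐ[μ] f) (hbdd : f ≤ᵐ[μ] fun _ ↦ M) :
    ∫ x, f x ∂μ = M * μ.real univ - ∫ t in 0..M, μ.real {x | f x ≤ t} := by
  have hcompl : ∀ᵐ t ∂(volume.restrict (Ioc 0 M)),
      μ.real {x | t ≤ f x} = μ.real univ - μ.real {x | f x ≤ t} := by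
    filter_upwards [meas_le_ae_eq_meas_lt μ (volume.restrict (Ioc 0 M)) f] with t ht
    rw [measureReal_def, ht, ← measureReal_def,
      ← measureReal_compl₀ (nullMeasurableSet_le hf.aemeasurable aemeasurable_const)]
    simp only [compl_ofPred, not_le]
  have hmono : Monotone fun t ↦ μ.real {x | f x ≤ t} :=
    fun s t hst ↦ measureReal_mono fun x hx ↦ le_trans hx hst
  rw [hf.integral_eq_integral_Ioc_meas_le hnn hbdd, integral_congr_ae hcompl,
    ← intervalIntegral.integral_of_le hM, intervalIntegral.integral_sub intervalIntegrable_const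
      hmono.intervalIntegrable, intervalIntegral.integral_const, smul_eq_mul, sub_zero]

theorem integral_sqrt_pow_three {k : ℝ} (hk : 0 ≤ k) :
    ∫ t in 0..k ^ 2, √t ^ 3 = 2 / 5 * k ^ 5 := by
  have hrpow : EqOn (fun t ↦ √t ^ 3) (fun t ↦ t ^ (3 / 2 : ℝ)) (uIcc 0 (k ^ 2)) := by
    intro t ht
    rw [uIcc_of_le (sq_nonneg k)] at ht
    show √t ^ 3 = t ^ (3 / 2 : ℝ)
    rw [sqrt_eq_rpow, ← rpow_natCast, ← rpow_mul ht.1]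
    norm_num
  rw [intervalIntegral.integral_congr hrpow, integral_rpow (Or.inl (by norm_num)),
    ← rpow_natCast, ← rpow_mul hk, zero_rpow (by norm_num)]
  norm_num
  ring

theorem continuous_Edisp : Continuous Edisp := by
  unfold Edisp
  fun_prop

theorem Edisp_le_sum_sq (p : Fin 3 → ℝ) : Edisp p ≤ ∑ i, p i ^ 2 := by
  rw [Edisp, Finset.mul_sum]
  exact Finset.sum_le_sum fun i _ ↦ by linarith [one_sub_sq_div_two_le_cos (x := p i)]

theorem Edisp_nonneg (p : Fin 3 → ℝ) : 0 ≤ Edisp p := by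
  unfold Edisp
  have := Finset.sum_nonneg fun i (_ : i ∈ Finset.univ) ↦ sub_nonneg.2 (cos_le_one (p i))
  linarith

theorem sum_sq_sub_sq_le_Edisp (p : Fin 3 → ℝ) :
    ∑ i, p i ^ 2 - (∑ i, p i ^ 2) ^ 2 / 12 ≤ Edisp p := by
  have hquartic : ∑ i, p i ^ 4 ≤ (∑ i, p i ^ 2) ^ 2 := by
    simpa only [← pow_mul] using
      Finset.sum_sq_le_sq_sum_of_nonneg fun i (_ : i ∈ Finset.univ) ↦ sq_nonneg (p i)
  have hcos := Finset.sum_le_sum fun i (_ : i ∈ Finset.univ) ↦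
    sq_div_two_sub_pow_four_div_le_one_sub_cos (p i)
  rw [Finset.sum_sub_distrib, ← Finset.sum_div, ← Finset.sum_div] at hcos
  rw [Edisp]
  linarith

theorem sum_sq_le_mul_Edisp {p : Fin 3 → ℝ} (hp : p ∈ cube3) :
    ∑ i, p i ^ 2 ≤ π ^ 2 / 4 * Edisp p := by
  rw [Edisp, ← mul_assoc, Finset.mul_sum]
  refine Finset.sum_le_sum fun i _ ↦ ?_
  have h : 2 / π ^ 2 * p i ^ 2 ≤ 1 - cos (p i) := by
    linarith [cos_le_one_sub_mul_cos_sq (abs_le.2 ⟨hp.1 i, hp.2 i⟩)]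
  rw [div_mul_eq_mul_div, div_le_iff₀ (by positivity)] at h
  linarith

theorem sum_sq_le_Edisp_mul_sq {p : Fin 3 → ℝ} (hp : p ∈ cube3) :
    ∑ i, p i ^ 2 ≤ Edisp p * (1 + Edisp p / 3) ^ 2 := by
  set s := ∑ i, p i ^ 2
  set E := Edisp p
  have hE : 0 ≤ E := Edisp_nonneg p
  have hs : 0 ≤ s := Finset.sum_nonneg fun i _ ↦ sq_nonneg (p i)
  have hπ : π ^ 2 ≤ 10 := by nlinarith [pi_lt_d2, pi_pos]
  have hsE : s ≤ 5 / 2 * E := by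
    nlinarith [sum_sq_le_mul_Edisp hp, mul_le_mul_of_nonneg_right hπ hE]
  have hs2 : s ^ 2 ≤ 7 * E ^ 2 := by nlinarith
  nlinarith [sum_sq_sub_sq_le_Edisp p, pow_nonneg hE 3]

def fermiSea (e : ℝ) : Set (Fin 3 → ℝ) := {p ∈ cube3 | Edisp p ≤ e}

theorem isCompact_fermiSea (e : ℝ) : IsCompact (fermiSea e) :=
  isCompact_Icc.inter_right (isClosed_le continuous_Edisp continuous_const)

theorem sum_sq_le_subset_fermiSea {r : ℝ} (hr₀ : 0 ≤ r) (hrπ : r ≤ π) :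
    {x : Fin 3 → ℝ | ∑ i, x i ^ 2 ≤ r ^ 2} ⊆ fermiSea (r ^ 2) := by
  intro x hx
  have hcoord : ∀ i, -π ≤ x i ∧ x i ≤ π := fun i ↦
    abs_le.1 <| abs_le_of_sq_le_sq ((Finset.single_le_sum (fun j _ ↦ sq_nonneg (x j))
      (Finset.mem_univ i)).trans (hx.trans (pow_le_pow_left₀ hr₀ hrπ 2))) pi_pos.le
  exact ⟨⟨fun i ↦ (hcoord i).1, fun i ↦ (hcoord i).2⟩, (Edisp_le_sum_sq x).trans hx⟩

theorem fermiSea_subset_sum_sq_le (r : ℝ) :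
    fermiSea (r ^ 2) ⊆ {x : Fin 3 → ℝ | ∑ i, x i ^ 2 ≤ (r * (1 + r ^ 2 / 3)) ^ 2} := by
  rintro x ⟨hcube, hE⟩
  have hE₀ := Edisp_nonneg x
  calc ∑ i, x i ^ 2 ≤ Edisp x * (1 + Edisp x / 3) ^ 2 := sum_sq_le_Edisp_mul_sq hcube
    _ ≤ r ^ 2 * (1 + r ^ 2 / 3) ^ 2 := by gcongr
    _ = (r * (1 + r ^ 2 / 3)) ^ 2 := by ring

theorem le_volume_fermiSea_sq {r : ℝ} (hr₀ : 0 ≤ r) (hrπ : r ≤ π) :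
    4 / 3 * π * r ^ 3 ≤ volume.real (fermiSea (r ^ 2)) := by
  rw [measureReal_def, ← ENNReal.ofReal_le_iff_le_toReal
    (isCompact_fermiSea _).measure_lt_top.ne, ← volume_sum_sq_le_sq hr₀]
  exact measure_mono (sum_sq_le_subset_fermiSea hr₀ hrπ)

theorem volume_fermiSea_sq_le {r : ℝ} (hr : 0 ≤ r) :
    volume.real (fermiSea (r ^ 2)) ≤ 4 / 3 * π * (r * (1 + r ^ 2 / 3)) ^ 3 :=
  ENNReal.toReal_le_of_le_ofReal (by positivity) <|
    (measure_mono (fermiSea_subset_sum_sq_le r)).trans (volume_sum_sq_le_sq (by positivity)).le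

theorem integral_fermiSea_eq {e : ℝ} (he : 0 ≤ e) :
    ∫ p in fermiSea e, Edisp p =
      e * volume.real (fermiSea e) - ∫ t in 0..e, volume.real (fermiSea t) := by
  have hS : MeasurableSet (fermiSea e) := (isCompact_fermiSea e).isClosed.measurableSet
  have : IsFiniteMeasure (volume.restrict (fermiSea e)) :=
    isFiniteMeasure_restrict.2 (isCompact_fermiSea e).measure_lt_top.ne
  have hlevel : EqOn (fun t ↦ (volume.restrict (fermiSea e)).real {p | Edisp p ≤ t})
      (fun t ↦ volume.real (fermiSea t)) (uIcc 0 e) := by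
    intro t ht
    rw [uIcc_of_le he] at ht
    simp only [measureReal_restrict_apply (measurableSet_le continuous_Edisp.measurable
      measurable_const)]
    congr 1
    ext p
    exact ⟨fun ⟨hpt, hp, _⟩ ↦ ⟨hp, hpt⟩, fun ⟨hp, hpt⟩ ↦ ⟨hpt, hp, hpt.trans ht.2⟩⟩
  rw [integral_eq_mul_sub_integral_measureReal_le he
    (continuous_Edisp.continuousOn.integrableOn_compact (isCompact_fermiSea e))
    (ae_of_all _ Edisp_nonneg) ((ae_restrict_iff' hS).2 (ae_of_all _ fun p hp ↦ hp.2)),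
    measureReal_restrict_apply_univ, intervalIntegral.integral_congr hlevel]

theorem volume_fermiSea_mem_Icc {t e : ℝ} (ht : t ∈ Icc 0 e) (he : e ≤ 1) :
    volume.real (fermiSea t) ∈ Icc (4 / 3 * π * √t ^ 3) (4 / 3 * π * (1 + 2 * e) * √t ^ 3) := by
  obtain ⟨ht₀, hte⟩ := ht
  have hsq : √t ^ 2 = t := sq_sqrt ht₀
  have hsqrt : √t ≤ 1 := sqrt_le_one.2 (hte.trans he)
  refine ⟨?_, ?_⟩
  · simpa only [hsq] using
      le_volume_fermiSea_sq (sqrt_nonneg t) (hsqrt.trans (by linarith [pi_gt_three]))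
  · have hcube : (1 + t / 3) ^ 3 ≤ 1 + 2 * e := by nlinarith [pow_nonneg ht₀ 3]
    calc volume.real (fermiSea t) ≤ 4 / 3 * π * (√t * (1 + √t ^ 2 / 3)) ^ 3 := by
          simpa only [hsq] using volume_fermiSea_sq_le (sqrt_nonneg t)
      _ = 4 / 3 * π * (1 + t / 3) ^ 3 * √t ^ 3 := by rw [hsq]; ring
      _ ≤ 4 / 3 * π * (1 + 2 * e) * √t ^ 3 := by gcongr

theorem abs_integral_fermiSea_sub_le {k : ℝ} (hk₀ : 0 ≤ k) (hk₁ : k ≤ 1) :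
    |(∫ p in fermiSea (k ^ 2), Edisp p) - 3 / 5 * (4 / 3 * π) * k ^ 5| ≤
      2 * (4 / 3 * π) * k ^ 7 := by
  have hk2 : k ^ 2 ≤ 1 := pow_le_one₀ hk₀ hk₁
  have hmono : Monotone fun t ↦ volume.real (fermiSea t) := fun s t hst ↦
    measureReal_mono (fun p hp ↦ ⟨hp.1, hp.2.trans hst⟩) (isCompact_fermiSea t).measure_lt_top.ne
  have hcont : IntervalIntegrable (fun t ↦ √t ^ 3) volume 0 (k ^ 2) :=
    (continuous_sqrt.pow 3).intervalIntegrable _ _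
  have hlow : 4 / 3 * π * (2 / 5 * k ^ 5) ≤ ∫ t in 0..k ^ 2, volume.real (fermiSea t) := by
    rw [← integral_sqrt_pow_three hk₀, ← intervalIntegral.integral_const_mul]
    exact intervalIntegral.integral_mono_on (sq_nonneg k) (hcont.const_mul _)
      hmono.intervalIntegrable fun t ht ↦ (volume_fermiSea_mem_Icc ht hk2).1
  have hhigh : ∫ t in 0..k ^ 2, volume.real (fermiSea t) ≤
      4 / 3 * π * (1 + 2 * k ^ 2) * (2 / 5 * k ^ 5) := by
    rw [← integral_sqrt_pow_three hk₀, ← intervalIntegral.integral_const_mul]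
    exact intervalIntegral.integral_mono_on (sq_nonneg k) hmono.intervalIntegrable
      (hcont.const_mul _) fun t ht ↦ (volume_fermiSea_mem_Icc ht hk2).2
  obtain ⟨hVk_low, hVk_high⟩ := volume_fermiSea_mem_Icc ⟨sq_nonneg k, le_rfl⟩ hk2
  rw [sqrt_sq hk₀] at hVk_low hVk_high
  rw [integral_fermiSea_eq (sq_nonneg k), abs_le]
  have hπ := pi_pos
  constructor <;> nlinarith [pow_nonneg hk₀ 5, pow_nonneg hk₀ 7]

theorem fermiE_cube_div (k : ℝ) :
    fermiE (k ^ 3 / (6 * π ^ 2)) = sInf {e | 4 / 3 * π * k ^ 3 ≤ volume.real (fermiSea e)} := by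
  have hρ : k ^ 3 / (6 * π ^ 2) * (2 * π) ^ 3 = 4 / 3 * π * k ^ 3 := by
    field_simp [pi_pos.ne']
    ring
  unfold fermiE
  simp only [le_div_iff₀ (by positivity : (0 : ℝ) < (2 * π) ^ 3), hρ]
  rfl

theorem nonneg_of_volume_fermiSea_pos {e : ℝ} (h : 0 < volume.real (fermiSea e)) : 0 ≤ e := by
  by_contra! he
  have hempty : fermiSea e = ∅ :=
    eq_empty_iff_forall_notMem.2 fun p hp ↦ (Edisp_nonneg p).not_gt (hp.2.trans_lt he)
  simp [hempty] at h

theorem fermiE_le_sq {k : ℝ} (hk₀ : 0 < k) (hkπ : k ≤ π) :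
    fermiE (k ^ 3 / (6 * π ^ 2)) ≤ k ^ 2 := by
  rw [fermiE_cube_div]
  have hc : 0 < 4 / 3 * π * k ^ 3 := by positivity
  exact csInf_le ⟨0, fun e he ↦ nonneg_of_volume_fermiSea_pos (hc.trans_le he)⟩
    (le_volume_fermiSea_sq hk₀.le hkπ)

theorem le_sqrt_fermiE {k : ℝ} (hk₀ : 0 < k) (hk₁ : k ≤ 1) :
    k * (1 - k ^ 2 / 3) ≤ √(fermiE (k ^ 3 / (6 * π ^ 2))) := by
  have hk2 : k ^ 2 ≤ 1 := pow_le_one₀ hk₀.le hk₁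
  have hc : 0 < 4 / 3 * π * k ^ 3 := by positivity
  rw [le_sqrt' (by nlinarith), fermiE_cube_div]
  refine le_csInf ⟨k ^ 2, le_volume_fermiSea_sq hk₀.le (hk₁.trans (by linarith [pi_gt_three]))⟩
    fun e he ↦ ?_
  have he₀ : 0 ≤ e := nonneg_of_volume_fermiSea_pos (hc.trans_le he)
  obtain ⟨κ, hκ₀, rfl⟩ : ∃ κ, 0 ≤ κ ∧ κ ^ 2 = e := ⟨√e, sqrt_nonneg e, sq_sqrt he₀⟩
  have hk : k ≤ κ * (1 + κ ^ 2 / 3) := by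
    have hcube := he.trans (volume_fermiSea_sq_le hκ₀)
    exact le_of_pow_le_pow_left₀ three_ne_zero (by positivity)
      (le_of_mul_le_mul_left hcube (by positivity))
  have hκ : k * (1 - k ^ 2 / 3) ≤ κ := by
    rcases le_or_gt k κ with h | h
    · nlinarith
    · nlinarith [mul_le_mul_of_nonneg_left (pow_le_pow_left₀ hκ₀ h.le 2) hκ₀]
  exact pow_le_pow_left₀ (by nlinarith) hκ 2

theorem eFree_eq (ρ : ℝ) :
    eFree ρ = (∫ p in fermiSea (fermiE ρ), Edisp p) / (2 * π) ^ 3 := rfl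

theorem abs_eFree_cube_div_sub_le {k : ℝ} (hk₀ : 0 < k) (hk₁ : k ≤ 1) :
    |eFree (k ^ 3 / (6 * π ^ 2)) - 3 / 5 * k ^ 5 / (6 * π ^ 2)| ≤ 3 * k ^ 7 / (6 * π ^ 2) := by
  set κ := √(fermiE (k ^ 3 / (6 * π ^ 2)))
  have hk2 : k ^ 2 ≤ 1 := pow_le_one₀ hk₀.le hk₁
  have hκ_low : k * (1 - k ^ 2 / 3) ≤ κ := le_sqrt_fermiE hk₀ hk₁
  have hκ_pos : 0 < κ := lt_of_lt_of_le (by nlinarith) hκ_low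
  have hκ_le : κ ≤ k := by
    rw [← sqrt_sq hk₀.le]
    exact sqrt_le_sqrt (fermiE_le_sq hk₀ (hk₁.trans (by linarith [pi_gt_three])))
  have hfermi : fermiE (k ^ 3 / (6 * π ^ 2)) = κ ^ 2 := (sq_sqrt (sqrt_pos.1 hκ_pos).le).symm
  have hκ5_low : k ^ 5 * (1 - 5 / 3 * k ^ 2) ≤ κ ^ 5 := by
    have hbern := one_add_mul_le_pow (a := -(k ^ 2 / 3)) (by nlinarith) 5
    calc k ^ 5 * (1 - 5 / 3 * k ^ 2) = k ^ 5 * (1 + (5 : ℕ) * -(k ^ 2 / 3)) := by push_cast; ring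
      _ ≤ k ^ 5 * (1 + -(k ^ 2 / 3)) ^ 5 := by gcongr
      _ = (k * (1 - k ^ 2 / 3)) ^ 5 := by ring
      _ ≤ κ ^ 5 := pow_le_pow_left₀ (by nlinarith) hκ_low 5
  have hJ := abs_integral_fermiSea_sub_le hκ_pos.le (hκ_le.trans hk₁)
  have hscale : ∀ y, y / (6 * π ^ 2) = 4 / 3 * π * y / (2 * π) ^ 3 := fun y ↦ by
    field_simp [pi_pos.ne']
    ring
  have h2π : (0 : ℝ) < (2 * π) ^ 3 := by positivity
  rw [eFree_eq, hfermi, hscale, hscale, ← sub_div, abs_div, abs_of_pos h2π,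
    div_le_div_iff_of_pos_right h2π]
  rw [abs_le] at hJ ⊢
  have hπ := pi_pos
  have hκ7 : κ ^ 7 ≤ k ^ 7 := pow_le_pow_left₀ hκ_pos.le hκ_le 7
  have hκ5_le : κ ^ 5 ≤ k ^ 5 := pow_le_pow_left₀ hκ_pos.le hκ_le 5
  constructor <;> nlinarith

theorem abs_eFree_sub_le {ρ : ℝ} (hρ₀ : 0 < ρ) (hρ₁ : ρ ≤ (6 * π ^ 2)⁻¹) :
    |eFree ρ - 3 / 5 * (6 * π ^ 2) ^ ((2 : ℝ) / 3) * ρ ^ ((5 : ℝ) / 3)| ≤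
      3 * (6 * π ^ 2) ^ ((4 : ℝ) / 3) * ρ ^ ((7 : ℝ) / 3) := by
  set a := 6 * π ^ 2
  have ha : 0 < a := by positivity
  set k := (a * ρ) ^ ((1 : ℝ) / 3)
  have hpow : ∀ n : ℕ, k ^ n = a ^ ((n : ℝ) / 3) * ρ ^ ((n : ℝ) / 3) := fun n ↦ by
    rw [← rpow_natCast, ← rpow_mul (by positivity), ← mul_rpow ha.le hρ₀.le]
    ring_nf
  have hdiv : ∀ n : ℕ, k ^ (n + 3) / a = a ^ ((n : ℝ) / 3) * ρ ^ (((n + 3 : ℕ) : ℝ) / 3) := by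
    intro n
    rw [hpow, show ((n + 3 : ℕ) : ℝ) / 3 = (n : ℝ) / 3 + 1 by push_cast; ring,
      rpow_add ha, rpow_one]
    field_simp
  have hρ : k ^ 3 / a = ρ := by
    rw [hpow]
    field_simp
    norm_num
  have hk₀ : 0 < k := by positivity
  have hk₁ : k ≤ 1 := rpow_le_one (by positivity)
    (by rwa [← le_div_iff₀' ha, one_div]) (by norm_num)
  have h := abs_eFree_cube_div_sub_le hk₀ hk₁
  rw [hρ, mul_div_assoc, mul_div_assoc, hdiv 2, hdiv 4] at h
  norm_num at h
  simpa only [mul_assoc] using h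

/-- **Low-density asymptotics of the ideal lattice Fermi gas energy** (Eq. (6)):
`e(ρ) = (3/5)(6π²)^{2/3} ρ^{5/3} + O(ρ^{7/3})`, and consequently
`e₀(ρ_u, ρ_d) = (3/5)(6π²)^{2/3}(ρ_u^{5/3} + ρ_d^{5/3}) + O(ρ^{7/3})`. -/
theorem lattice_fermi_gas_low_density :
    ∃ C ρ0 : ℝ, 0 < C ∧ 0 < ρ0 ∧
      (∀ ρ : ℝ, 0 < ρ → ρ ≤ ρ0 →
        |eFree ρ - (3/5) * (6 * Real.pi^2) ^ ((2:ℝ)/3) * ρ ^ ((5:ℝ)/3)| ≤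
          C * ρ ^ ((7:ℝ)/3)) ∧
      (∀ ρu ρd : ℝ, 0 < ρu → 0 < ρd → ρu + ρd ≤ ρ0 →
        |e0 ρu ρd - (3/5) * (6 * Real.pi^2) ^ ((2:ℝ)/3) *
            (ρu ^ ((5:ℝ)/3) + ρd ^ ((5:ℝ)/3))| ≤
          C * (ρu + ρd) ^ ((7:ℝ)/3)) := by
  set A := (6 * π ^ 2) ^ ((4 : ℝ) / 3)
  refine ⟨6 * A, (6 * π ^ 2)⁻¹, by positivity, by positivity, fun ρ hρ₀ hρ₁ ↦ ?_,
    fun ρu ρd hu hd hsum ↦ ?_⟩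
  · exact (abs_eFree_sub_le hρ₀ hρ₁).trans (by gcongr; norm_num)
  have hbound : ∀ ρ, 0 < ρ → ρ ≤ ρu + ρd →
      |eFree ρ - 3 / 5 * (6 * π ^ 2) ^ ((2 : ℝ) / 3) * ρ ^ ((5 : ℝ) / 3)| ≤
        3 * A * (ρu + ρd) ^ ((7 : ℝ) / 3) := fun ρ hρ₀ hρ ↦
    (abs_eFree_sub_le hρ₀ (hρ.trans hsum)).trans (by gcongr)
  calc _ = |(eFree ρu - 3 / 5 * (6 * π ^ 2) ^ ((2 : ℝ) / 3) * ρu ^ ((5 : ℝ) / 3)) +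
          (eFree ρd - 3 / 5 * (6 * π ^ 2) ^ ((2 : ℝ) / 3) * ρd ^ ((5 : ℝ) / 3))| := by
        congr 1
        rw [e0]
        ring
    _ ≤ 3 * A * (ρu + ρd) ^ ((7 : ℝ) / 3) + 3 * A * (ρu + ρd) ^ ((7 : ℝ) / 3) :=
        (abs_add_le _ _).trans
          (add_le_add (hbound ρu hu (by linarith)) (hbound ρd hd (by linarith)))
    _ = 6 * A * (ρu + ρd) ^ ((7 : ℝ) / 3) := by ring
end
end

section
/- There is a constant C > 0 with the following property. Let R, L be positive integers with R ≤ L, and let Y' ⊂ ([0,L]∩ℤ)³ be a set of points whose pairwise Euclidean distances are all greater than 2√3 R. Then the number of points of Y' whose Euclidean distance to the boundary of the cube [0,L]³ is less than R+1 is at most C (L/R)². -/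
open scoped BigOperators

noncomputable section

/-- The Euclidean distance between a lattice point and a point of `ℝ³`. -/
def dEuc (x : Z3) (z : Fin 3 → ℝ) : ℝ := Real.sqrt (∑ i, ((x i : ℝ) - z i)^2)

/-- The solid cube `[0,L]³ ⊂ ℝ³`. -/
def cubeL (L : ℕ) : Set (Fin 3 → ℝ) := Set.Icc (fun _ => (0:ℝ)) (fun _ => (L:ℝ))

/-- The Euclidean distance of a lattice point to the topological boundary of `[0,L]³`. -/
def distBoundary (L : ℕ) (x : Z3) : ℝ :=
  sInf {d : ℝ | ∃ z ∈ frontier (cubeL L), d = dEuc x z}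

/-!
Cut `ℤ³` into cubes of side `d = 2R + 1` via the coordinatewise quotient `y ↦ y / d`. Two points
of one cube differ by at most `2R` in each coordinate, hence lie at distance at most `2√3 R`, so
a separated set meets every cube at most once. A point at distance `< R + 1` from the boundary
has a coordinate within `R` of `0` or of `L`, so its cube lies in one of three layers of cubes
orthogonal to that coordinate axis. There are at most `3 · 3 · (L / d + 1)²` such cubes, and
`L / d + 1 ≤ 2 L / R`.
-/

open Finset

lemma interior_cubeL (L : ℕ) :
    interior (cubeL L) = Set.pi Set.univ (fun _ : Fin 3 => Set.Ioo (0 : ℝ) L) := by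
  rw [cubeL, ← Set.pi_univ_Icc, interior_pi_set Set.finite_univ]
  simp [interior_Icc]

lemma isClosed_cubeL (L : ℕ) : IsClosed (cubeL L) := isClosed_Icc

lemma zero_mem_frontier_cubeL (L : ℕ) : (0 : Fin 3 → ℝ) ∈ frontier (cubeL L) := by
  rw [(isClosed_cubeL L).frontier_eq, interior_cubeL]
  exact ⟨⟨le_rfl, fun _ => L.cast_nonneg⟩, fun h => (h 0 trivial).1.false⟩

lemma exists_eq_zero_or_eq_of_mem_frontier_cubeL {L : ℕ} {z : Fin 3 → ℝ}
    (hz : z ∈ frontier (cubeL L)) : ∃ j, z j = 0 ∨ z j = L := by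
  rw [(isClosed_cubeL L).frontier_eq, interior_cubeL] at hz
  obtain ⟨⟨h0, hL⟩, hint⟩ := hz
  simp only [Set.mem_pi, Set.mem_univ, forall_const, Set.mem_Ioo, not_forall, not_and_or,
    not_lt] at hint
  obtain ⟨j, hj | hj⟩ := hint
  exacts [⟨j, .inl (le_antisymm hj (h0 j))⟩, ⟨j, .inr (le_antisymm (hL j) hj)⟩]

lemma abs_sub_le_dEuc (x : Z3) (z : Fin 3 → ℝ) (j : Fin 3) : |(x j : ℝ) - z j| ≤ dEuc x z := by
  rw [dEuc, ← Real.sqrt_sq_eq_abs]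
  exact Real.sqrt_le_sqrt <|
    single_le_sum (f := fun i => ((x i : ℝ) - z i) ^ 2) (fun i _ => sq_nonneg _) (mem_univ j)

lemma exists_coord_lt_of_distBoundary_lt {L : ℕ} {x : Z3} {c : ℝ} (h : distBoundary L x < c) :
    ∃ j, (x j : ℝ) < c ∨ (L : ℝ) - x j < c := by
  obtain ⟨_, ⟨z, hz, rfl⟩, hzc⟩ :=
    exists_lt_of_csInf_lt (by exact ⟨_, 0, zero_mem_frontier_cubeL L, rfl⟩) h
  have hdist := abs_sub_le_dEuc x z
  obtain ⟨j, hj | hj⟩ := exists_eq_zero_or_eq_of_mem_frontier_cubeL hz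
  · have hxj := (le_abs_self _).trans (hdist j)
    rw [hj, sub_zero] at hxj
    exact ⟨j, .inl (hxj.trans_lt hzc)⟩
  · have hxj := (neg_le_abs _).trans (hdist j)
    rw [hj, neg_sub] at hxj
    exact ⟨j, .inr (hxj.trans_lt hzc)⟩

lemma enormZ_le_of_abs_le {x : Z3} {m : ℝ} (h : ∀ i, |(x i : ℝ)| ≤ m) :
    enormZ x ≤ √3 * m := by
  have hm : 0 ≤ m := (abs_nonneg _).trans (h 0)
  rw [enormZ, Real.sqrt_le_iff]
  refine ⟨by positivity, ?_⟩
  calc ∑ i, (x i : ℝ) ^ 2 ≤ ∑ _i : Fin 3, m ^ 2 :=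
        sum_le_sum fun i _ => sq_le_sq' (abs_le.mp (h i)).1 (abs_le.mp (h i)).2
    _ = (√3 * m) ^ 2 := by
        rw [mul_pow, Real.sq_sqrt zero_le_three, sum_const, card_univ, Fintype.card_fin]
        ring

lemma abs_sub_lt_of_ediv_eq {y z d : ℤ} (hd : 0 < d) (h : y / d = z / d) : |y - z| < d := by
  have hy := Int.mul_ediv_add_emod y d
  have hz := Int.mul_ediv_add_emod z d
  have := Int.emod_nonneg y hd.ne'
  have := Int.emod_nonneg z hd.ne'
  have := Int.emod_lt_of_pos y hd
  have := Int.emod_lt_of_pos z hd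
  rw [h] at hy
  rw [abs_lt]
  constructor <;> linarith

def boxIndex (d : ℤ) (y : Z3) : Z3 := fun i => y i / d

lemma injOn_boxIndex {R : ℕ} {Y : Set Z3}
    (hsep : ∀ y ∈ Y, ∀ z ∈ Y, y ≠ z → 2 * √3 * R < enormZ (y - z)) :
    Set.InjOn (boxIndex (2 * R + 1)) Y := by
  intro y hy z hz hyz
  by_contra hne
  refine (hsep y hy z hz hne).not_ge ?_
  have hcoord (i : Fin 3) : |((y - z) i : ℝ)| ≤ 2 * R := by
    have := abs_sub_lt_of_ediv_eq (by positivity) (congrFun hyz i)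
    push_cast [Pi.sub_apply]
    exact_mod_cast Int.lt_add_one_iff.mp this
  calc enormZ (y - z) ≤ √3 * (2 * R) := enormZ_le_of_abs_le hcoord
    _ = 2 * √3 * R := by ring

lemma ediv_mem_of_le_or_le {R L y d : ℤ} (hRd : R < d) (hy0 : 0 ≤ y) (hyL : y ≤ L)
    (hy : y ≤ R ∨ L - y ≤ R) : y / d ∈ ({0, (L - R) / d, (L - R) / d + 1} : Finset ℤ) := by
  have hd : 0 < d := by omega
  simp only [mem_insert, mem_singleton]
  rcases hy with hy | hy
  · exact .inl (Int.ediv_eq_zero_of_lt hy0 (by omega))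
  · have hlow : (L - R) / d ≤ y / d := Int.ediv_le_ediv hd (by omega)
    have hhigh : y / d ≤ (L - R) / d + 1 :=
      calc y / d ≤ (L - R + 1 * d) / d := Int.ediv_le_ediv hd (by omega)
        _ = (L - R) / d + 1 := Int.add_mul_ediv_right _ _ hd.ne'
    omega

section Slabs

variable {ι α : Type*} [Fintype ι] [DecidableEq ι] [DecidableEq α]

def slabs (S T : Finset α) : Finset (ι → α) :=
  univ.biUnion fun j => Fintype.piFinset fun i => if i = j then S else T

lemma mem_slabs {S T : Finset α} {x : ι → α} :
    x ∈ slabs S T ↔ ∃ j, x j ∈ S ∧ ∀ i ≠ j, x i ∈ T := by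
  simp only [slabs, mem_biUnion, mem_univ, true_and, Fintype.mem_piFinset]
  refine exists_congr fun j => ⟨fun h => ⟨by simpa using h j, fun i hi => by simpa [hi] using h i⟩,
    fun h i => ?_⟩
  split_ifs with hi
  exacts [hi ▸ h.1, h.2 i hi]

lemma card_slabs_le (S T : Finset α) :
    (slabs S T : Finset (ι → α)).card ≤
      Fintype.card ι * (S.card * T.card ^ (Fintype.card ι - 1)) := by
  calc (slabs S T : Finset (ι → α)).card
      ≤ ∑ j : ι, (Fintype.piFinset fun i => if i = j then S else T).card := card_biUnion_le
    _ = ∑ _j : ι, S.card * T.card ^ (Fintype.card ι - 1) := by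
        refine sum_congr rfl fun j _ => ?_
        rw [Fintype.card_piFinset, Fintype.prod_eq_mul_prod_compl j, if_pos rfl,
          prod_congr rfl fun i hi => by rw [if_neg (mem_compl.mp hi ∘ mem_singleton.mpr)],
          prod_const, card_compl, card_singleton]
    _ = _ := by rw [sum_const, card_univ, smul_eq_mul]

end Slabs

lemma boxIndex_mem_slabs {R L : ℕ} {y : Z3} (hy : ∀ j, 0 ≤ y j ∧ y j ≤ L)
    (hnear : distBoundary L y < R + 1) :
    boxIndex (2 * R + 1) y ∈
      slabs {0, ((L : ℤ) - R) / (2 * R + 1), ((L : ℤ) - R) / (2 * R + 1) + 1}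
        (Icc 0 ((L / (2 * R + 1) : ℕ) : ℤ)) := by
  obtain ⟨j, hj⟩ := exists_coord_lt_of_distBoundary_lt hnear
  have hj' : y j ≤ R ∨ L - y j ≤ R := by
    rcases hj with hj | hj
    · exact .inl (Int.lt_add_one_iff.mp (by exact_mod_cast hj))
    · exact .inr (Int.lt_add_one_iff.mp (by exact_mod_cast hj))
  refine mem_slabs.mpr ⟨j, ediv_mem_of_le_or_le (by omega) (hy j).1 (hy j).2 hj', fun i _ => ?_⟩
  refine mem_Icc.mpr ⟨Int.ediv_nonneg (hy i).1 (by omega), ?_⟩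
  push_cast
  exact Int.ediv_le_ediv (by omega) (hy i).2

lemma natCast_div_add_one_le_two_mul_div {R L : ℕ} (hR : 0 < R) (hRL : R ≤ L) :
    ((L / (2 * R + 1) : ℕ) : ℝ) + 1 ≤ 2 * (L / R) := by
  have hRpos : (0 : ℝ) < R := by exact_mod_cast hR
  have hdiv : ((L / (2 * R + 1) : ℕ) : ℝ) ≤ L / R :=
    calc ((L / (2 * R + 1) : ℕ) : ℝ) ≤ L / ((2 * R + 1 : ℕ) : ℝ) := Nat.cast_div_le
      _ ≤ L / R := div_le_div_of_nonneg_left L.cast_nonneg hRpos (by push_cast; linarith)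
  have hone : (1 : ℝ) ≤ L / R := (one_le_div hRpos).mpr (by exact_mod_cast hRL)
  linarith

/-- **Counting well-separated points near the boundary**: there is `C > 0` such that for
positive integers `R ≤ L` and any set `Y' ⊂ ([0,L] ∩ ℤ)³ ` of points with pairwise
distances `> 2√3 R`, the number of points of `Y'` at distance `< R+1` from the boundary
of `[0,L]³` is at most `C (L/R)²`. -/
theorem separated_points_near_boundary :
    ∃ C : ℝ, 0 < C ∧
      ∀ R L : ℕ, 0 < R → 0 < L → R ≤ L →
      ∀ Y' : Finset Z3,
        (∀ y ∈ Y', ∀ j, 0 ≤ y j ∧ y j ≤ (L:ℤ)) →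
        (∀ y ∈ Y', ∀ z ∈ Y', y ≠ z → 2 * Real.sqrt 3 * R < enormZ (y - z)) →
        (((Y' : Set Z3) ∩ {y | distBoundary L y < (R:ℝ) + 1}).ncard : ℝ) ≤
          C * ((L:ℝ)/(R:ℝ))^2 := by
  refine ⟨36, by norm_num, fun R L hR _ hRL Y' hbox hsep => ?_⟩
  set F := Y'.filter fun y => distBoundary L y < R + 1
  have hF : (Y' : Set Z3) ∩ {y | distBoundary L y < R + 1} = F := by ext; simp [F]
  set K := L / (2 * R + 1)
  set S : Finset ℤ := {0, ((L : ℤ) - R) / (2 * R + 1), ((L : ℤ) - R) / (2 * R + 1) + 1}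
  set T : Finset ℤ := Icc 0 (K : ℤ)
  have hmaps : Set.MapsTo (boxIndex (2 * R + 1)) F (slabs S T : Finset Z3) := fun y hy =>
    boxIndex_mem_slabs (hbox y (mem_filter.mp hy).1) (mem_filter.mp hy).2
  have hcard : F.card ≤ 3 * (3 * (K + 1) ^ 2) :=
    calc F.card ≤ (slabs S T : Finset Z3).card :=
          card_le_card_of_injOn _ hmaps ((injOn_boxIndex hsep).mono (filter_subset _ _))
      _ ≤ 3 * (S.card * T.card ^ 2) := card_slabs_le S T
      _ ≤ 3 * (3 * (K + 1) ^ 2) := by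
          gcongr
          · exact card_le_three
          · simp [T]
  rw [hF, Set.ncard_coe_finset]
  calc (F.card : ℝ) ≤ 9 * ((K : ℝ) + 1) ^ 2 := by exact_mod_cast hcard.trans_eq (by ring)
    _ ≤ 9 * (2 * (L / R)) ^ 2 := by gcongr; exact natCast_div_add_one_le_two_mul_div hR hRL
    _ = 36 * (L / R) ^ 2 := by ring
end
end
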